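/- arXiv:2502.06793 — 2 statements merged into one kernel-verified Lean document; each statement's English description precedes it below -/
import Mathlib

section
/- Let μ be a probability measure with finite variance on an extended metric space Y, let ȳ be a barycenter of μ (i.e., a minimizer of x ↦ ∫ d_Y(x,z)^2 dμ(z)), and suppose there exists an EVI_K gradient flow {y_t} of a lower semicontinuous functional E starting from ȳ. Then Jensen's inequality holds: E(ȳ) ≤ ∫_Y E(z) dμ(z) − (K/2) ∫_Y d_Y(ȳ,z)^2 dμ(z). -/
/-! Integrating the EVI inequality over `τ ∈ (0, t]` and then against `μ` gives
`∫ d(y_t,z)² - d(ȳ,z)² dμ ≤ t (2 ∫ E dμ - 2 inf_{(0,t]} E(y_τ) - K Var(μ) + error)`, where the error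
comes from replacing `d(y_τ,z)²` by `d(ȳ,z)²` and is `O(sup_{(0,t]} d(y_τ,ȳ))` in `L¹(μ)`. Since `ȳ`
is a barycenter, the left side is nonnegative. Dividing by `t` and letting `t → 0`, lower
semicontinuity of `E` along `y_τ → ȳ` replaces the infimum by `E(ȳ)` and the error vanishes. -/

open MeasureTheory Set Filter

/-- The squared distance from a curve to a point. -/
noncomputable def dsq {Y : Type*} [EMetricSpace Y] (y : ℝ → Y) (z : Y) (τ : ℝ) : ℝ :=
  (edist (y τ) z).toReal ^ 2

open scoped ENNReal Topology

lemma ENNReal.add_sq_le_two_mul (a b : ℝ≥0∞) : (a + b) ^ 2 ≤ 2 * (a ^ 2 + b ^ 2) := by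
  induction a using ENNReal.recTopCoe with
  | top => simp
  | coe a =>
    induction b using ENNReal.recTopCoe with
    | top => simp
    | coe b => exact_mod_cast (add_sq_le : ((a : NNReal) + b) ^ 2 ≤ 2 * (a ^ 2 + b ^ 2))

section PseudoEMetric

variable {Y : Type*} [PseudoEMetricSpace Y]

lemma abs_toReal_edist_sq_sub_le {p q z : Y} {ε : ℝ} (hpq : edist p q < ENNReal.ofReal ε)
    (hqz : edist q z ≠ ∞) :
    |(edist p z).toReal ^ 2 - (edist q z).toReal ^ 2| ≤ 2 * ε * (edist q z).toReal + ε ^ 2 := by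
  have hpq_ne : edist p q ≠ ∞ := hpq.ne_top
  have hpz : edist p z ≠ ∞ := ne_top_of_le_ne_top (by finiteness) (edist_triangle p q z)
  have hr : (edist p q).toReal < ε := ENNReal.toReal_lt_of_lt_ofReal hpq
  have h₁ : (edist p z).toReal ≤ (edist p q).toReal + (edist q z).toReal :=
    ENNReal.toReal_le_add (edist_triangle p q z) hpq_ne hqz
  have h₂ : (edist q z).toReal ≤ (edist p q).toReal + (edist p z).toReal :=
    ENNReal.toReal_le_add (edist_triangle_left q z p) hpq_ne hpz
  have : 0 ≤ (edist p q).toReal := ENNReal.toReal_nonneg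
  have : 0 ≤ (edist q z).toReal := ENNReal.toReal_nonneg
  rw [abs_le]
  constructor <;> nlinarith

variable [MeasurableSpace Y] {μ : Measure Y}

lemma lintegral_edist_sq_ne_top [IsFiniteMeasure μ] {x x' : Y} (h : ∫⁻ z, edist x z ^ 2 ∂μ ≠ ∞)
    (hx' : edist x' x ≠ ∞) : ∫⁻ z, edist x' z ^ 2 ∂μ ≠ ∞ := by
  have hle : ∀ z, edist x' z ^ 2 ≤ 2 * (edist x' x ^ 2 + edist x z ^ 2) := fun z =>
    (pow_le_pow_left' (edist_triangle x' x z) 2).trans (ENNReal.add_sq_le_two_mul _ _)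
  refine ne_top_of_le_ne_top ?_ (lintegral_mono hle)
  rw [lintegral_const_mul' _ _ ENNReal.ofNat_ne_top,
    lintegral_add_left measurable_const, lintegral_const]
  finiteness

variable [OpensMeasurableSpace Y]

lemma integrable_toReal_edist_sq {x : Y} (h : ∫⁻ z, edist x z ^ 2 ∂μ ≠ ∞) :
    Integrable (fun z => (edist x z).toReal ^ 2) μ := by
  have hmeas := (measurable_edist_right (x := x)).pow_const 2
  simpa only [ENNReal.toReal_pow] using integrable_toReal_of_lintegral_ne_top hmeas.aemeasurable h

lemma integral_toReal_edist_sq {x : Y} (h : ∫⁻ z, edist x z ^ 2 ∂μ ≠ ∞) :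
    ∫ z, (edist x z).toReal ^ 2 ∂μ = (∫⁻ z, edist x z ^ 2 ∂μ).toReal := by
  have hmeas := (measurable_edist_right (x := x)).pow_const 2
  simpa only [ENNReal.toReal_pow] using integral_toReal hmeas.aemeasurable (ae_lt_top hmeas h)

lemma integrable_toReal_edist [IsFiniteMeasure μ] {x : Y} (h : ∫⁻ z, edist x z ^ 2 ∂μ ≠ ∞) :
    Integrable (fun z => (edist x z).toReal) μ :=
  have hmeas := (measurable_edist_right (x := x)).ennreal_toReal
  ((memLp_two_iff_integrable_sq hmeas.aestronglyMeasurable).2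
    (integrable_toReal_edist_sq h)).integrable one_le_two

end PseudoEMetric

lemma intervalIntegral_le_mul_of_ae_le {g : ℝ → ℝ} {t C : ℝ} (ht : 0 ≤ t)
    (hg : IntervalIntegrable g volume 0 t) (hle : ∀ᵐ τ ∂volume.restrict (Ioc 0 t), g τ ≤ C) :
    ∫ τ in 0..t, g τ ≤ C * t := by
  have := intervalIntegral.integral_mono_ae_restrict ht hg intervalIntegrable_const
    (g := fun _ => C) (by rwa [← Measure.restrict_congr_set Ioc_ae_eq_Icc])
  simpa [mul_comm] using this

lemma sub_le_mul_of_ae_evi {f g : ℝ → ℝ} {φ : ℝ → EReal} {K t e c η : ℝ} (ht : 0 ≤ t)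
    (hg : IntervalIntegrable g volume 0 t) (hf : f t - f 0 = ∫ τ in 0..t, g τ)
    (hevi : ∀ᵐ τ ∂volume.restrict (Ioc 0 t), ((g τ / 2 + K / 2 * f τ : ℝ) : EReal) ≤ e - φ τ)
    (hc : ∀ τ ∈ Ioc 0 t, (c : EReal) ≤ φ τ) (hη : ∀ τ ∈ Ioc 0 t, |f τ - f 0| ≤ η) :
    f t - f 0 ≤ (2 * (e - c) - K * f 0 + |K| * η) * t := by
  rw [hf]
  refine intervalIntegral_le_mul_of_ae_le ht hg ?_
  filter_upwards [hevi, ae_restrict_mem measurableSet_Ioc] with τ hτ hmem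
  have hle : g τ / 2 + K / 2 * f τ ≤ e - c := by
    exact_mod_cast hτ.trans (EReal.sub_le_sub le_rfl (hc τ hmem))
  have hK : -(K * (f τ - f 0)) ≤ |K| * η :=
    calc -(K * (f τ - f 0)) ≤ |K| * |f τ - f 0| := (neg_le_abs _).trans (abs_mul _ _).le
      _ ≤ |K| * η := mul_le_mul_of_nonneg_left (hη τ hmem) (abs_nonneg K)
  linarith

def SatisfiesEVI {Y : Type*} [EMetricSpace Y] (K : ℝ) (E : Y → EReal) (y : ℝ → Y) : Prop :=
  ∀ z : Y, E z ≠ ⊤ → (∃ t : ℝ, 0 < t ∧ edist z (y t) ≠ ⊤) →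
    ∃ g : ℝ → ℝ,
      (∀ s t : ℝ, 0 ≤ s → s ≤ t →
        IntervalIntegrable g volume s t ∧
        dsq y z t - dsq y z s = ∫ τ in s..t, g τ) ∧
      (∀ᵐ τ ∂(volume.restrict (Set.Ioi (0:ℝ))),
        HasDerivAt (dsq y z) (g τ) τ ∧
        ((g τ / 2 + K / 2 * dsq y z τ : ℝ) : EReal) ≤ E z - E (y τ))

section EVI

variable {Y : Type*} [EMetricSpace Y] {K : ℝ} {E : Y → EReal} {y : ℝ → Y}

lemma SatisfiesEVI.dsq_sub_le (hevi : SatisfiesEVI K E y) {z : Y} {t c ε : ℝ}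
    (hEtop : E z ≠ ⊤) (hEbot : E z ≠ ⊥) (hz : edist (y 0) z ≠ ∞) (ht : 0 < t)
    (hc : ∀ τ ∈ Ioc 0 t, (c : EReal) ≤ E (y τ))
    (hclose : ∀ τ ∈ Ioc 0 t, edist (y τ) (y 0) < ENNReal.ofReal ε) :
    dsq y z t - dsq y z 0 ≤
      (2 * ((E z).toReal - c) - K * dsq y z 0 +
        |K| * (2 * ε * (edist (y 0) z).toReal + ε ^ 2)) * t := by
  have hzt : edist z (y t) ≠ ∞ := by
    rw [edist_comm]
    exact ne_top_of_le_ne_top (ENNReal.add_ne_top.2 ⟨(hclose t ⟨ht, le_rfl⟩).ne_top, hz⟩)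
      (edist_triangle _ _ _)
  obtain ⟨g, hftc, hae⟩ := hevi z hEtop ⟨t, ht, hzt⟩
  obtain ⟨hg, hf⟩ := hftc 0 t le_rfl ht.le
  refine sub_le_mul_of_ae_evi (φ := E ∘ y) ht.le hg hf ?_ hc
    fun τ hτ => abs_toReal_edist_sq_sub_le (hclose τ hτ) hz
  filter_upwards [ae_restrict_of_ae_restrict_of_subset Ioc_subset_Ioi_self hae] with τ hτ
  rw [EReal.coe_toReal hEtop hEbot]
  exact hτ.2

lemma SatisfiesEVI.two_mul_le_integral_sub_add [MeasurableSpace Y] [OpensMeasurableSpace Y]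
    {μ : Measure Y} [IsProbabilityMeasure μ] (hevi : SatisfiesEVI K E y) (hEbot : ∀ x, E x ≠ ⊥)
    (hEae : ∀ᵐ z ∂μ, E z ≠ ⊤) (hEint : Integrable (fun z => (E z).toReal) μ)
    (hV : ∫⁻ z, edist (y 0) z ^ 2 ∂μ ≠ ∞)
    (hbar : ∀ x, ∫⁻ z, edist (y 0) z ^ 2 ∂μ ≤ ∫⁻ z, edist x z ^ 2 ∂μ) {c ε : ℝ}
    (hnear : ∀ᶠ τ in 𝓝[>] 0, (c : EReal) ≤ E (y τ) ∧ edist (y τ) (y 0) < ENNReal.ofReal ε) :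
    2 * c ≤ 2 * ∫ z, (E z).toReal ∂μ - K * (∫⁻ z, edist (y 0) z ^ 2 ∂μ).toReal +
      |K| * (2 * ε * ∫ z, (edist (y 0) z).toReal ∂μ + ε ^ 2) := by
  obtain ⟨t, ht, hsub⟩ := mem_nhdsGT_iff_exists_Ioc_subset.1 hnear
  have hVt : ∫⁻ z, edist (y t) z ^ 2 ∂μ ≠ ∞ :=
    lintegral_edist_sq_ne_top hV (hsub ⟨ht, le_rfl⟩).2.ne_top
  have hpt : ∀ᵐ z ∂μ, dsq y z t - dsq y z 0 ≤
      (2 * ((E z).toReal - c) - K * dsq y z 0 +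
        |K| * (2 * ε * (edist (y 0) z).toReal + ε ^ 2)) * t := by
    filter_upwards [hEae, ae_lt_top (measurable_edist_right.pow_const 2) hV]
      with z hEz hz
    exact hevi.dsq_sub_le hEz (hEbot z) (by simpa using hz.ne) ht (fun τ hτ => (hsub hτ).1)
      fun τ hτ => (hsub hτ).2
  have h0 : Integrable (fun z => dsq y z 0) μ := integrable_toReal_edist_sq hV
  have hdt : Integrable (fun z => dsq y z t) μ := integrable_toReal_edist_sq hVt
  have hd : Integrable (fun z => (edist (y 0) z).toReal) μ := integrable_toReal_edist hV
  have hmono : ∫ z, dsq y z t - dsq y z 0 ∂μ ≤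
      ∫ z, (2 * ((E z).toReal - c) - K * dsq y z 0 +
        |K| * (2 * ε * (edist (y 0) z).toReal + ε ^ 2)) * t ∂μ :=
    integral_mono_ae (by fun_prop) (by fun_prop) hpt
  rw [integral_sub hdt h0, integral_mul_const, integral_add (by fun_prop) (by fun_prop),
    integral_sub (by fun_prop) (by fun_prop), integral_const_mul,
    integral_sub hEint (integrable_const c), integral_const_mul, integral_const_mul,
    integral_add (by fun_prop) (integrable_const _), integral_const_mul] at hmono
  simp only [dsq, integral_toReal_edist_sq hV, integral_toReal_edist_sq hVt, integral_const,
    probReal_univ, smul_eq_mul, one_mul] at hmono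
  have hmin : 0 ≤ (∫⁻ z, edist (y t) z ^ 2 ∂μ).toReal - (∫⁻ z, edist (y 0) z ^ 2 ∂μ).toReal :=
    sub_nonneg.2 (ENNReal.toReal_mono hVt (hbar (y t)))
  nlinarith [(mul_nonneg_iff_of_pos_right ht).1 (hmin.trans hmono)]

end EVI

/-- Jensen's inequality from `EVI_K` gradient flows: if `ȳ = y 0` is a barycenter of a
finite-variance probability measure `μ` and `{y_t}` is an `EVI_K` gradient flow of a
lower semicontinuous `E` starting from `ȳ` (a locally absolutely continuous curve,
converging to `ȳ` as `t → 0⁺`, along which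
`(1/2)(d/dt)d(y_t,z)² + (K/2)d(y_t,z)² ≤ E(z) − E(y_t)` a.e. for each admissible `z`),
then `E(ȳ) ≤ ∫ E dμ − (K/2)∫ d(ȳ,z)² dμ`. -/
theorem stmt_2 {Y : Type*} [EMetricSpace Y] [MeasurableSpace Y] [BorelSpace Y] (K : ℝ)
    (E : Y → EReal) (hEbot : ∀ x, E x ≠ ⊥) (hElsc : LowerSemicontinuous E)
    (μ : Measure Y) [IsProbabilityMeasure μ]
    (hVar : (⨅ x : Y, ∫⁻ z, edist x z ^ 2 ∂μ) < ⊤)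
    (hEae : ∀ᵐ z ∂μ, E z ≠ ⊤)
    (hEint : Integrable (fun z => (E z).toReal) μ)
    (y : ℝ → Y)
    (hbar : (∫⁻ z, edist (y 0) z ^ 2 ∂μ) = ⨅ x : Y, ∫⁻ z, edist x z ^ 2 ∂μ)
    (hinit : Tendsto y (nhdsWithin 0 (Set.Ioi 0)) (nhds (y 0)))
    (hEVI : ∀ z : Y, E z ≠ ⊤ → (∃ t : ℝ, 0 < t ∧ edist z (y t) ≠ ⊤) →
      ∃ g : ℝ → ℝ,
        (∀ s t : ℝ, 0 ≤ s → s ≤ t →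
          IntervalIntegrable g volume s t ∧
          dsq y z t - dsq y z s = ∫ τ in s..t, g τ) ∧
        (∀ᵐ τ ∂(volume.restrict (Set.Ioi (0:ℝ))),
          HasDerivAt (dsq y z) (g τ) τ ∧
          ((g τ / 2 + K / 2 * dsq y z τ : ℝ) : EReal) ≤ E z - E (y τ))) :
    E (y 0) ≤ (((∫ z, (E z).toReal ∂μ) -
      K / 2 * (∫⁻ z, edist (y 0) z ^ 2 ∂μ).toReal : ℝ) : EReal) := by
  have hV : ∫⁻ z, edist (y 0) z ^ 2 ∂μ ≠ ∞ := hbar ▸ hVar.ne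
  have hmin : ∀ x, ∫⁻ z, edist (y 0) z ^ 2 ∂μ ≤ ∫⁻ z, edist x z ^ 2 ∂μ := fun x =>
    hbar ▸ iInf_le _ x
  set V := (∫⁻ z, edist (y 0) z ^ 2 ∂μ).toReal
  set M := ∫ z, (edist (y 0) z).toReal ∂μ
  refine EReal.ge_of_forall_gt_iff_ge.1 fun c hc => ?_
  have hbound : ∀ ε > 0, 2 * c ≤ 2 * ∫ z, (E z).toReal ∂μ - K * V + |K| * (2 * ε * M + ε ^ 2) :=
    fun ε hε => SatisfiesEVI.two_mul_le_integral_sub_add hEVI hEbot hEae hEint hV hmin <|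
      hinit.eventually <| ((hElsc (y 0) c hc).mono fun _ h => h.le).and
        (Metric.eball_mem_nhds (y 0) (ENNReal.ofReal_pos.2 hε))
  have hlim : Tendsto (fun ε => 2 * ∫ z, (E z).toReal ∂μ - K * V + |K| * (2 * ε * M + ε ^ 2))
      (𝓝[>] 0) (𝓝 (2 * ∫ z, (E z).toReal ∂μ - K * V)) := by
    have hcont : Continuous fun ε : ℝ =>
        2 * ∫ z, (E z).toReal ∂μ - K * V + |K| * (2 * ε * M + ε ^ 2) := by fun_prop
    simpa using tendsto_nhdsWithin_of_tendsto_nhds (hcont.tendsto 0)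
  have := ge_of_tendsto hlim (eventually_nhdsWithin_of_forall hbound)
  exact_mod_cast (by linarith : c ≤ ∫ z, (E z).toReal ∂μ - K / 2 * V)
end

section
/- On the real line with Lebesgue measure, the Boltzmann entropy is displacement convex: if μ_0 = ρ_0 ℒ and μ_1 = ρ_1 ℒ are absolutely continuous probability measures with finite second moment and finite entropy, and (μ_t) is the W_2-geodesic between them (given by the monotone rearrangement interpolation), then Ent_ℒ(μ_t) ≤ (1−t)Ent_ℒ(μ_0) + t Ent_ℒ(μ_1) for all t ∈ [0,1]. -/
open MeasureTheory Set

/-- The Boltzmann entropy `Ent_m(μ) = ∫ ρ log ρ dm` if `μ = ρ m`, and `+∞` otherwise. -/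
noncomputable def entropy {X : Type*} [MeasurableSpace X] (m μ : Measure X) : EReal :=
  open scoped Classical in
  if μ ≪ m ∧ Integrable
      (fun x => (μ.rnDeriv m x).toReal * Real.log (μ.rnDeriv m x).toReal) m then
    (((∫ x, (μ.rnDeriv m x).toReal * Real.log (μ.rnDeriv m x).toReal ∂m) : ℝ) : EReal)
  else ⊤

/-!
Write `μ₀ = ρ ℒ`. A monotone `T` is differentiable a.e., and the set where `T' = 0` is
`μ₀`-null: its image under `T` is Lebesgue-null (one-dimensional Sard), hence `T_#μ₀`-null
because `μ₁ = T_#μ₀ ≪ ℒ`. On `{T' > 0}` the map `T` is injective, so the change of variables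
formula gives `Ent(f_#μ₀) = ∫ ρ log ρ - ρ log f'` for `f = T` and for
`S = (1 - t) id + t T`, whose derivative is `S' = 1 - t + t T'`. Concavity of `log` gives
`log S' ≥ t log T'`, which integrates to the claim; the bound `|log S'| ≤ |log T'|` provides
the integrability of the entropy integrand of `S_#μ₀`.
-/

open Filter Topology Real
open scoped ENNReal

namespace Monotone

variable {f : ℝ → ℝ}

theorem deriv_eq_zero_of_eq (hf : Monotone f) {a b : ℝ} (hab : a < b) (h : f a = f b) :
    deriv f a = 0 := by
  by_contra hne
  have hconst : f =ᶠ[𝓝[≥] a] fun _ => f a := by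
    filter_upwards [Ico_mem_nhdsGE hab] with x hx
    exact le_antisymm (h ▸ hf hx.2.le) (hf hx.1)
  exact hne <| (uniqueDiffWithinAt_Ici a).eq_deriv _
    (differentiableAt_of_deriv_ne_zero hne).hasDerivAt.hasDerivWithinAt
    ((hasDerivWithinAt_const a _ (f a)).congr_of_eventuallyEq hconst rfl)

theorem injOn_setOf_deriv_pos (hf : Monotone f) : InjOn f {x | 0 < deriv f x} := by
  intro a ha b hb hab
  by_contra hne
  rcases lt_or_gt_of_ne hne with h | h
  · exact ha.ne' (hf.deriv_eq_zero_of_eq h hab)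
  · exact hb.ne' (hf.deriv_eq_zero_of_eq h hab.symm)

theorem ae_deriv_pos (hf : Monotone f) {μ : Measure ℝ} (hμ : μ ≪ volume)
    (hmap : μ.map f ≪ volume) : ∀ᵐ x ∂μ, 0 < deriv f x := by
  set A := {x | DifferentiableAt ℝ f x ∧ deriv f x = 0}
  have hA : volume (f '' A) = 0 :=
    addHaar_image_eq_zero_of_det_fderivWithin_eq_zero volume
      (fun x hx => hx.1.hasDerivAt.hasDerivWithinAt.hasFDerivWithinAt)
      (fun x hx => by simp [hx.2])
  have hμA : μ A = 0 := measure_mono_null (subset_preimage_image f A) <| nonpos_iff_eq_zero.mp <|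
    (Measure.le_map_apply hf.measurable.aemeasurable _).trans_eq (hmap hA)
  filter_upwards [hμ.ae_le hf.ae_differentiableAt, measure_eq_zero_iff_ae_notMem.mp hμA]
    with x hdiff hx
  exact hf.deriv_nonneg.lt_of_ne' fun h => hx ⟨hdiff, h⟩

end Monotone

open scoped Classical in
theorem entropy_withDensity {X : Type*} [MeasurableSpace X] (m : Measure X) [SigmaFinite m]
    {g : X → ℝ≥0∞} (hg : Measurable g) :
    entropy m (m.withDensity g) =
      if Integrable (fun x => (g x).toReal * log (g x).toReal) m then
        ((∫ x, (g x).toReal * log (g x).toReal ∂m : ℝ) : EReal)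
      else ⊤ := by
  have hρ : ∀ᵐ x ∂m, ((m.withDensity g).rnDeriv m x).toReal
      * log ((m.withDensity g).rnDeriv m x).toReal = (g x).toReal * log (g x).toReal := by
    filter_upwards [Measure.rnDeriv_withDensity m hg] with x hx
    rw [hx]
  simp only [entropy, withDensity_absolutelyContinuous, true_and, integrable_congr hρ,
    integral_congr_ae hρ]

theorem exists_map_eq_withDensity {μ : Measure ℝ} [SigmaFinite μ] (hμ : μ ≪ volume)
    {f : ℝ → ℝ} (hf : Measurable f) (hinj : InjOn f {x | 0 < deriv f x})
    (hpos : ∀ᵐ x ∂μ, 0 < deriv f x) :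
    ∃ g : ℝ → ℝ≥0∞, Measurable g ∧ μ.map f = volume.withDensity g ∧
      (∀ x, 0 < deriv f x → g (f x) = μ.rnDeriv volume x / ENNReal.ofReal (deriv f x)) ∧
      ∀ y ∉ f '' {x | 0 < deriv f x}, g y = 0 := by
  set E := {x | 0 < deriv f x}
  have hE : MeasurableSet E := measurableSet_lt measurable_const (measurable_deriv f)
  have hderiv : ∀ x ∈ E, HasDerivWithinAt f (deriv f x) E x := fun x hx =>
    (differentiableAt_of_deriv_ne_zero hx.ne').hasDerivAt.hasDerivWithinAt
  have : StandardBorelSpace E := hE.standardBorel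
  have hdens : Measurable fun x => μ.rnDeriv volume x / ENNReal.ofReal (deriv f x) :=
    (Measure.measurable_rnDeriv _ _).div (measurable_deriv f).ennreal_ofReal
  -- `f` is a measurable embedding of `E` (Lusin–Souslin), so `ρ / f'` descends to `f '' E`.
  obtain ⟨w, hwm, hwf⟩ := ((hf.comp measurable_subtype_coe).measurableEmbedding
    hinj.injective).exists_measurable_extend (hdens.comp measurable_subtype_coe) fun _ => ⟨0⟩
  have hwE : ∀ x ∈ E, w (f x) = μ.rnDeriv volume x / ENNReal.ofReal (deriv f x) :=
    fun x hx => congrFun hwf ⟨x, hx⟩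
  have himE : MeasurableSet (f '' E) := hE.image_of_measurable_injOn hf hinj
  refine ⟨(f '' E).indicator w, hwm.indicator himE, ?_,
    fun x hx => (indicator_of_mem (mem_image_of_mem f (show x ∈ E from hx)) w).trans (hwE x hx),
    fun y hy => indicator_of_notMem hy w⟩
  ext A hA
  have hcancel : ∀ x ∈ E ∩ f ⁻¹' A,
      ENNReal.ofReal |deriv f x| * w (f x) = μ.rnDeriv volume x := fun x hx => by
    rw [hwE x hx.1, abs_of_pos hx.1]
    exact ENNReal.mul_div_cancel (ENNReal.ofReal_pos.2 hx.1).ne' ENNReal.ofReal_ne_top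
  rw [Measure.map_apply hf hA, withDensity_apply _ hA, setLIntegral_indicator himE,
    ← image_inter_preimage, lintegral_image_eq_lintegral_abs_deriv_mul (hE.inter (hf hA))
      (fun x hx => (hderiv x hx.1).mono inter_subset_left) (hinj.mono inter_subset_left),
    setLIntegral_congr_fun (hE.inter (hf hA)) hcancel, ← withDensity_apply _ (hE.inter (hf hA)),
    Measure.withDensity_rnDeriv_eq _ _ hμ, inter_comm E,
    measure_inter_conull (t := E) (ae_iff.mp hpos)]

theorem mul_div_mul_log_div (r : ℝ) {d : ℝ} (hd : 0 < d) :
    d * (r / d * log (r / d)) = r * log r - r * log d := by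
  rcases eq_or_ne r 0 with rfl | hr
  · simp
  · rw [log_div hr hd.ne']
    field_simp

open scoped Classical in
theorem entropy_map {μ : Measure ℝ} [SigmaFinite μ] (hμ : μ ≪ volume) {f : ℝ → ℝ}
    (hf : Measurable f) (hinj : InjOn f {x | 0 < deriv f x}) (hpos : ∀ᵐ x ∂μ, 0 < deriv f x) :
    entropy volume (μ.map f) =
      if Integrable (fun x => (μ.rnDeriv volume x).toReal * log (μ.rnDeriv volume x).toReal
          - (μ.rnDeriv volume x).toReal * log (deriv f x)) volume then
        ((∫ x, ((μ.rnDeriv volume x).toReal * log (μ.rnDeriv volume x).toReal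
          - (μ.rnDeriv volume x).toReal * log (deriv f x)) : ℝ) : EReal)
      else ⊤ := by
  obtain ⟨g, hg, hmap, hgE, hg0⟩ := exists_map_eq_withDensity hμ hf hinj hpos
  rw [hmap, entropy_withDensity volume hg]
  set E := {x | 0 < deriv f x}
  set L : ℝ → ℝ := fun x => (μ.rnDeriv volume x).toReal * log (μ.rnDeriv volume x).toReal
    - (μ.rnDeriv volume x).toReal * log (deriv f x)
  set G : ℝ → ℝ := fun y => (g y).toReal * log (g y).toReal
  have hE : MeasurableSet E := measurableSet_lt measurable_const (measurable_deriv f)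
  have hderiv : ∀ x ∈ E, HasDerivWithinAt f (deriv f x) E x := fun x hx =>
    (differentiableAt_of_deriv_ne_zero hx.ne').hasDerivAt.hasDerivWithinAt
  have himE : MeasurableSet (f '' E) := hE.image_of_measurable_injOn hf hinj
  have hG : G = (f '' E).indicator G := by
    ext y
    by_cases hy : y ∈ f '' E <;> simp [hy, G, hg0]
  have hL : L =ᵐ[volume] E.indicator L := by
    filter_upwards [Measure.ae_rnDeriv_ne_zero_imp_of_ae volume hpos] with x hx
    by_cases hxE : x ∈ E
    · simp [hxE]
    · simp [L, hxE, not_imp_comm.mp hx hxE]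
  have hGL : EqOn (fun x => |deriv f x| • G (f x)) L E := fun x (hx : 0 < deriv f x) => by
    simp only [G, L, hgE x hx, ENNReal.toReal_div, ENNReal.toReal_ofReal hx.le, abs_of_pos hx,
      smul_eq_mul]
    exact mul_div_mul_log_div _ hx
  have hint_iff : Integrable G ↔ Integrable L := by
    rw [integrable_congr hL, integrable_indicator_iff hE, hG, integrable_indicator_iff himE,
      integrableOn_image_iff_integrableOn_abs_deriv_smul hE hderiv hinj,
      integrableOn_congr_fun hGL hE]
  have hint_eq : ∫ y, G y = ∫ x, L x := by
    rw [integral_congr_ae hL, integral_indicator hE, hG, integral_indicator himE,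
      integral_image_eq_integral_abs_deriv_smul hE hderiv hinj, setIntegral_congr_fun hE hGL]
  simp only [hint_iff, hint_eq]

theorem one_sub_add_mul_pos {t d : ℝ} (ht : t ∈ Icc (0 : ℝ) 1) (hd : 0 < d) :
    0 < 1 - t + t * d := by
  simpa using (convex_Ioi (0 : ℝ)) (mem_Ioi.2 one_pos) (mem_Ioi.2 hd) (sub_nonneg.2 ht.2) ht.1
    (by ring)

theorem mul_log_le_log_one_sub_add_mul {t d : ℝ} (ht : t ∈ Icc (0 : ℝ) 1) (hd : 0 < d) :
    t * log d ≤ log (1 - t + t * d) := by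
  simpa using strictConcaveOn_log_Ioi.concaveOn.2 (mem_Ioi.2 one_pos) (mem_Ioi.2 hd)
    (sub_nonneg.2 ht.2) ht.1 (by ring)

theorem abs_log_one_sub_add_mul_le {t d : ℝ} (ht : t ∈ Icc (0 : ℝ) 1) (hd : 0 < d) :
    |log (1 - t + t * d)| ≤ |log d| := by
  have hpos := one_sub_add_mul_pos ht hd
  have hlow := mul_log_le_log_one_sub_add_mul ht hd
  rw [abs_le]
  constructor
  · nlinarith [neg_abs_le (log d), abs_nonneg (log d), ht.1, ht.2]
  · rcases le_total d 1 with hd1 | hd1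
    · have := log_nonpos hpos.le (by nlinarith [ht.1, ht.2])
      linarith [abs_nonneg (log d)]
    · have := log_le_log hpos (by nlinarith [ht.1, ht.2] : 1 - t + t * d ≤ d)
      linarith [le_abs_self (log d)]

theorem integral_mul_log_interp_le {α : Type*} [MeasurableSpace α] {m : Measure α}
    {ρ d d' : α → ℝ} (hρ : Measurable ρ) (hρ0 : ∀ x, 0 ≤ ρ x) (hd' : Measurable d')
    {t : ℝ} (ht : t ∈ Icc (0 : ℝ) 1) (hdd' : ∀ᵐ x ∂m, ρ x ≠ 0 → 0 < d x ∧ d' x = 1 - t + t * d x)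
    (h₀ : Integrable (fun x => ρ x * log (ρ x)) m)
    (h₁ : Integrable (fun x => ρ x * log (ρ x) - ρ x * log (d x)) m) :
    Integrable (fun x => ρ x * log (ρ x) - ρ x * log (d' x)) m ∧
      ∫ x, ρ x * log (ρ x) - ρ x * log (d' x) ∂m ≤
        (1 - t) * ∫ x, ρ x * log (ρ x) ∂m + t * ∫ x, ρ x * log (ρ x) - ρ x * log (d x) ∂m := by
  have hpt : ∀ᵐ x ∂m, |ρ x * log (d' x)| ≤ |ρ x * log (d x)| ∧
      t * (ρ x * log (d x)) ≤ ρ x * log (d' x) := by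
    filter_upwards [hdd'] with x hx
    rcases eq_or_ne (ρ x) 0 with h0 | h0
    · simp [h0]
    obtain ⟨hd, hd'x⟩ := hx h0
    rw [hd'x, abs_mul, abs_mul, abs_of_nonneg (hρ0 x), mul_left_comm]
    exact ⟨mul_le_mul_of_nonneg_left (abs_log_one_sub_add_mul_le ht hd) (hρ0 x),
      mul_le_mul_of_nonneg_left (mul_log_le_log_one_sub_add_mul ht hd) (hρ0 x)⟩
  have hdI : Integrable (fun x => ρ x * log (d x)) m :=
    (h₀.sub h₁).congr (Eventually.of_forall fun x => sub_sub_cancel _ _)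
  have hd'I : Integrable (fun x => ρ x * log (ρ x) - ρ x * log (d' x)) m :=
    h₀.sub (hdI.mono (hρ.mul hd'.log).aestronglyMeasurable (hpt.mono fun x hx => hx.1))
  refine ⟨hd'I, ?_⟩
  rw [← integral_const_mul, ← integral_const_mul,
    ← integral_add (h₀.const_mul _) (h₁.const_mul _)]
  exact integral_mono_ae hd'I ((h₀.const_mul _).add (h₁.const_mul _))
    (hpt.mono fun x hx => by linarith [hx.2])

theorem stmt_10_general (μ₀ μ₁ : Measure ℝ) [IsProbabilityMeasure μ₀]
    (hac₀ : μ₀ ≪ volume) (hac₁ : μ₁ ≪ volume)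
    (hent₀ : entropy volume μ₀ ≠ ⊤) (hent₁ : entropy volume μ₁ ≠ ⊤)
    (T : ℝ → ℝ) (hTmono : Monotone T) (hpush : μ₀.map T = μ₁)
    (t : ℝ) (ht : t ∈ Set.Icc (0:ℝ) 1) :
    entropy volume (μ₀.map (fun x => (1 - t) * x + t * T x)) ≤
      ((1 - t : ℝ) : EReal) * entropy volume μ₀ + ((t : ℝ) : EReal) * entropy volume μ₁ := by
  classical
  set S : ℝ → ℝ := fun x => (1 - t) * x + t * T x
  have hSmono : Monotone S := fun a b hab =>
    add_le_add (mul_le_mul_of_nonneg_left hab (sub_nonneg.2 ht.2))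
      (mul_le_mul_of_nonneg_left (hTmono hab) ht.1)
  have hS' : ∀ x, 0 < deriv T x → deriv S x = 1 - t + t * deriv T x := fun x hx =>
    (((hasDerivAt_id' x).const_mul (1 - t)).add
      ((differentiableAt_of_deriv_ne_zero hx.ne').hasDerivAt.const_mul t)).deriv.trans (by ring)
  have hTpos : ∀ᵐ x ∂μ₀, 0 < deriv T x := hTmono.ae_deriv_pos hac₀ (hpush ▸ hac₁)
  have hSpos : ∀ᵐ x ∂μ₀, 0 < deriv S x :=
    hTpos.mono fun x hx => (hS' x hx) ▸ one_sub_add_mul_pos ht hx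
  have hST : ∀ᵐ x, (μ₀.rnDeriv volume x).toReal ≠ 0 →
      0 < deriv T x ∧ deriv S x = 1 - t + t * deriv T x := by
    filter_upwards [Measure.ae_rnDeriv_ne_zero_imp_of_ae volume hTpos] with x hx h0
    have hx := hx fun h => h0 (by simp [h])
    exact ⟨hx, hS' x hx⟩
  obtain ⟨⟨-, hI₀⟩, -⟩ := ite_ne_right_iff.mp hent₀
  rw [← hpush, entropy_map hac₀ hTmono.measurable hTmono.injOn_setOf_deriv_pos hTpos] at hent₁ ⊢
  obtain ⟨hI₁, -⟩ := ite_ne_right_iff.mp hent₁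
  obtain ⟨hIS, hle⟩ := integral_mul_log_interp_le (Measure.measurable_rnDeriv _ _).ennreal_toReal
    (fun _ => ENNReal.toReal_nonneg) (measurable_deriv S) ht hST hI₀ hI₁
  rw [entropy_map hac₀ hSmono.measurable hSmono.injOn_setOf_deriv_pos hSpos, if_pos hIS,
    entropy, if_pos ⟨hac₀, hI₀⟩, if_pos hI₁]
  exact_mod_cast hle

/-- Displacement convexity of the Boltzmann entropy on `(ℝ, |·|, ℒ¹)`: along the
`W₂`-geodesic `μ_t = ((1−t)id + tT)_#μ₀` given by the monotone rearrangement `T`,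
`Ent(μ_t) ≤ (1−t)Ent(μ₀) + t Ent(μ₁)`. -/
theorem stmt_10 (μ₀ μ₁ : Measure ℝ) [IsProbabilityMeasure μ₀] [IsProbabilityMeasure μ₁]
    (hac₀ : μ₀ ≪ volume) (hac₁ : μ₁ ≪ volume)
    (hmom₀ : ∫⁻ x, ENNReal.ofReal (x ^ 2) ∂μ₀ < ⊤)
    (hmom₁ : ∫⁻ x, ENNReal.ofReal (x ^ 2) ∂μ₁ < ⊤)
    (hent₀ : entropy volume μ₀ ≠ ⊤) (hent₁ : entropy volume μ₁ ≠ ⊤)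
    (T : ℝ → ℝ) (hTmono : Monotone T) (hTm : Measurable T) (hpush : μ₀.map T = μ₁)
    (t : ℝ) (ht : t ∈ Set.Icc (0:ℝ) 1) :
    entropy volume (μ₀.map (fun x => (1 - t) * x + t * T x)) ≤
      ((1 - t : ℝ) : EReal) * entropy volume μ₀ + ((t : ℝ) : EReal) * entropy volume μ₁ :=
  stmt_10_general μ₀ μ₁ hac₀ hac₁ hent₀ hent₁ T hTmono hpush t ht
end
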